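/- In every 2-fair energy game, player 1 has memoryless winning strategies: for every node q ∈ Win_1, there exist c ∈ ℕ and a memoryless (positional) player-1 strategy σ such that for all player-2 strategies π, the play from q conforming with σ and π lies in En_c^f. -/

import Mathlib

/-!
Common framework: weighted game arenas, plays, strategies, mean-payoff and
energy objectives, strong transition fairness.
-/

open Filter

/-- A two-player weighted game arena: `p1` is the set of player-1 nodes
(player-2 nodes are the complement), `edge` the edge relation, `w` the integer
weight function, and every node has at least one outgoing edge. -/
structure Arena (Q : Type) where
  p1 : Set Q
  edge : Q → Q → Prop
  w : Q → Q → ℤ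
  succ_exists : ∀ q, ∃ q', edge q q'

variable {Q : Type}

/-- A strategy: to every history `H` (the sequence of previously visited nodes)
and current node `q`, it assigns an edge-successor of `q`.  (It is only ever
consulted at the nodes of the corresponding player.) -/
def Strategy (A : Arena Q) : Type :=
  { f : List Q → Q → Q // ∀ H q, A.edge q (f H q) }

open Classical in
/-- Auxiliary: the history (list of earlier nodes) and the current node after
`n` steps of the play from `q` in which player 1 uses `σ` and player 2 uses `π`. -/
noncomputable def hist (A : Arena Q) (σ π : Strategy A) (q : Q) : ℕ → List Q × Q
  | 0 => ([], q)
  | n + 1 =>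
    let p := hist A σ π q n
    (p.1 ++ [p.2], if p.2 ∈ A.p1 then σ.1 p.1 p.2 else π.1 p.1 p.2)

/-- `play A σ π q` is the unique play from `q` conforming with the player-1
strategy `σ` and the player-2 strategy `π`. -/
noncomputable def play (A : Arena Q) (σ π : Strategy A) (q : Q) (n : ℕ) : Q :=
  (hist A σ π q n).2

/-- Weight `w(τ[0;i])` of the prefix of length `i` of the play `τ`. -/
def prefWeight (A : Arena Q) (τ : ℕ → Q) (i : ℕ) : ℤ :=
  ∑ j ∈ Finset.range i, A.w (τ j) (τ (j + 1))

/-- `avg(τ) = liminf_{i→∞} w(τ[0;i])/i`. -/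
noncomputable def mpAvg (A : Arena Q) (τ : ℕ → Q) : ℝ :=
  Filter.liminf (fun i : ℕ => (prefWeight A τ i : ℝ) / (i : ℝ)) Filter.atTop

/-- A play `τ` is fair (w.r.t. the fair edges `Ef`) if every fair edge whose
source node occurs infinitely often in `τ` is itself taken infinitely often. -/
def FairPlay (Ef : Q → Q → Prop) (τ : ℕ → Q) : Prop :=
  ∀ q q', Ef q q' → (∀ N, ∃ i ≥ N, τ i = q) →
    (∀ N, ∃ i ≥ N, τ i = q ∧ τ (i + 1) = q')

/-- A strategy is memoryless (positional) if its choice depends only on the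
current node. -/
def Memoryless (A : Arena Q) (σ : Strategy A) : Prop :=
  ∀ H₁ H₂ q, σ.1 H₁ q = σ.1 H₂ q

/-- A strategy is finite-memory if it is implemented by a memory structure
`(M, m0, α, β)` with `M` finite: the choice after history `H` at node `q` is
`β (α̂ m0 H) q`, where `α̂` iterates the update function `α` along `H`. -/
def FiniteMemory (A : Arena Q) (σ : Strategy A) : Prop :=
  ∃ (M : Type) (_ : Finite M) (m0 : M) (α : M → Q → M) (β : M → Q → Q),
    ∀ H q, σ.1 H q = β (H.foldl α m0) q

/-- Energy objective with initial credit `c`: every prefix weight stays ≥ `-c`. -/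
def EnObj (A : Arena Q) (c : ℕ) (τ : ℕ → Q) : Prop :=
  ∀ i : ℕ, 0 ≤ (c : ℤ) + prefWeight A τ i

/-- Player-1 winning region for an abstract objective. -/
def Win1 (A : Arena Q) (Obj : (ℕ → Q) → Prop) (q : Q) : Prop :=
  ∃ σ : Strategy A, ∀ π : Strategy A, Obj (play A σ π q)

/-- Player-2 winning region for an abstract objective. -/
def Win2 (A : Arena Q) (Obj : (ℕ → Q) → Prop) (q : Q) : Prop :=
  ∃ π : Strategy A, ∀ σ : Strategy A, ¬ Obj (play A σ π q)

/-- The `i`-fair mean-payoff objective `MP_v^f` (for player 1), where `i = true`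
means the arena is 1-fair and `i = false` means it is 2-fair:
`MP_v ∩ {fair plays}` in the 1-fair case and `MP_v ∪ {non-fair plays}` in the
2-fair case. -/
def MPfObj (A : Arena Q) (Ef : Q → Q → Prop) (v : ℝ) (i : Bool) (τ : ℕ → Q) : Prop :=
  if i then (v ≤ mpAvg A τ ∧ FairPlay Ef τ)
  else (v ≤ mpAvg A τ ∨ ¬ FairPlay Ef τ)

/-- Player-1 winning region of a 1-fair energy game with unknown initial credit. -/
def Win1En1f (A : Arena Q) (Ef : Q → Q → Prop) (q : Q) : Prop :=
  ∃ c : ℕ, ∃ σ : Strategy A, ∀ π : Strategy A,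
    EnObj A c (play A σ π q) ∧ FairPlay Ef (play A σ π q)

/-- Player-2 winning region of a 1-fair energy game with unknown initial credit. -/
def Win2En1f (A : Arena Q) (Ef : Q → Q → Prop) (q : Q) : Prop :=
  ∃ π : Strategy A, ∀ c : ℕ, ∀ σ : Strategy A,
    ¬ (EnObj A c (play A σ π q) ∧ FairPlay Ef (play A σ π q))

/-- Player-1 winning region of a 2-fair energy game with unknown initial credit. -/
def Win1En2f (A : Arena Q) (Ef : Q → Q → Prop) (q : Q) : Prop :=
  ∃ c : ℕ, ∃ σ : Strategy A, ∀ π : Strategy A,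
    EnObj A c (play A σ π q) ∨ ¬ FairPlay Ef (play A σ π q)

/-- Player-2 winning region of a 2-fair energy game with unknown initial credit. -/
def Win2En2f (A : Arena Q) (Ef : Q → Q → Prop) (q : Q) : Prop :=
  ∃ π : Strategy A, ∀ c : ℕ, ∀ σ : Strategy A,
    ¬ (EnObj A c (play A σ π q) ∨ ¬ FairPlay Ef (play A σ π q))

/-- Player-1 winning region of an ordinary (non-fair) energy game with unknown
initial credit. -/
def Win1En (A : Arena Q) (q : Q) : Prop :=
  ∃ c : ℕ, ∃ σ : Strategy A, ∀ π : Strategy A, EnObj A c (play A σ π q)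

/-- Player-2 winning region of an ordinary (non-fair) energy game with unknown
initial credit. -/
def Win2En (A : Arena Q) (q : Q) : Prop :=
  ∃ π : Strategy A, ∀ c : ℕ, ∀ σ : Strategy A, ¬ EnObj A c (play A σ π q)

section AuxMemoryless

open Classical

variable {Q : Type}

noncomputable def dflt (A : Arena Q) (q : Q) : Q := (A.succ_exists q).choose

lemma dflt_edge (A : Arena Q) (q : Q) : A.edge q (dflt A q) := (A.succ_exists q).choose_spec

/-- Set of sufficient initial credits at a node. -/
def NSet (A : Arena Q) (q : Q) : Set ℕ :=
  {c | ∃ σ : Strategy A, ∀ π : Strategy A, EnObj A c (play A σ π q)}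

lemma play_zero (A : Arena Q) (σ π : Strategy A) (q : Q) : play A σ π q 0 = q := rfl

lemma hist_succ (A : Arena Q) (σ π : Strategy A) (q : Q) (n : ℕ) :
    hist A σ π q (n + 1) =
      ((hist A σ π q n).1 ++ [(hist A σ π q n).2],
        if (hist A σ π q n).2 ∈ A.p1 then σ.1 (hist A σ π q n).1 (hist A σ π q n).2
        else π.1 (hist A σ π q n).1 (hist A σ π q n).2) := by
  rfl

lemma hist_fst (A : Arena Q) (σ π : Strategy A) (q : Q) :
    ∀ n, (hist A σ π q n).1 = (List.range n).map (play A σ π q)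
  | 0 => by simp [hist]
  | n + 1 => by
      rw [hist_succ, List.range_succ]
      simp [hist_fst A σ π q n, play]

lemma play_succ (A : Arena Q) (σ π : Strategy A) (q : Q) (n : ℕ) :
    play A σ π q (n + 1) =
      if play A σ π q n ∈ A.p1 then σ.1 (hist A σ π q n).1 (play A σ π q n)
      else π.1 (hist A σ π q n).1 (play A σ π q n) := by
  show (hist A σ π q (n+1)).2 = _
  rw [hist_succ]
  rfl

lemma play_edge (A : Arena Q) (σ π : Strategy A) (q : Q) (n : ℕ) :
    A.edge (play A σ π q n) (play A σ π q (n + 1)) := by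
  rw [play_succ]
  split
  · exact σ.2 _ _
  · exact π.2 _ _

lemma prefWeight_succ (A : Arena Q) (τ : ℕ → Q) (n : ℕ) :
    prefWeight A τ (n + 1) = prefWeight A τ n + A.w (τ n) (τ (n + 1)) :=
  Finset.sum_range_succ _ _

end AuxMemoryless
section AuxShift

open Classical

variable {Q : Type}

/-- Player-1 strategy shifted by one initial node. -/
def shiftS (A : Arena Q) (σ : Strategy A) (q : Q) : Strategy A :=
  ⟨fun H x => σ.1 (q :: H) x, fun H x => σ.2 (q :: H) x⟩

open Classical in
noncomputable def extFun (A : Arena Q) (π' : Strategy A) (q q' : Q) : List Q → Q → Q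
  | [], x => if x = q then q' else dflt A x
  | _ :: H', x => π'.1 H' x

lemma extFun_nil_self (A : Arena Q) (π' : Strategy A) (q q' : Q) :
    extFun A π' q q' [] q = q' := by simp [extFun]

lemma extFun_cons (A : Arena Q) (π' : Strategy A) (q q' a : Q) (H : List Q) (x : Q) :
    extFun A π' q q' (a :: H) x = π'.1 H x := rfl

lemma extFun_edge (A : Arena Q) (π' : Strategy A) (q q' : Q) (he : A.edge q q') :
    ∀ H x, A.edge x (extFun A π' q q' H x) := by
  intro H x
  cases H with
  | nil =>
      by_cases h : x = q
      · subst h; rw [extFun_nil_self]; exact he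
      · show A.edge x (if x = q then q' else dflt A x)
        rw [if_neg h]; exact dflt_edge A x
  | cons a H' => exact π'.2 H' x

/-- Player-2 strategy that first moves from `q` to `q'` and then plays like `π'`
with histories shifted by one. -/
noncomputable def extendP (A : Arena Q) (π' : Strategy A) (q q' : Q) (he : A.edge q q') :
    Strategy A :=
  ⟨extFun A π' q q', extFun_edge A π' q q' he⟩

lemma hist_shift (A : Arena Q) (σ : Strategy A) (π' : Strategy A) (q q' : Q)
    (he : A.edge q q') (hfirst : q ∈ A.p1 → σ.1 [] q = q') :
    ∀ n, hist A σ (extendP A π' q q' he) q (n + 1) =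
      (q :: (hist A (shiftS A σ q) π' q' n).1, (hist A (shiftS A σ q) π' q' n).2)
  | 0 => by
      rw [hist_succ]
      show (([] : List Q) ++ [q], _) = ([q], q')
      refine Prod.ext (by simp) ?_
      show (if q ∈ A.p1 then σ.1 [] q else extFun A π' q q' [] q) = q'
      by_cases h : q ∈ A.p1
      · rw [if_pos h]; exact hfirst h
      · rw [if_neg h]; exact extFun_nil_self A π' q q'
  | n + 1 => by
      rw [hist_succ, hist_shift A σ π' q q' he hfirst n, hist_succ]
      refine Prod.ext (by simp) ?_
      show (if (hist A (shiftS A σ q) π' q' n).2 ∈ A.p1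
              then σ.1 (q :: (hist A (shiftS A σ q) π' q' n).1) _
              else extFun A π' q q' (q :: (hist A (shiftS A σ q) π' q' n).1) _) = _
      by_cases h : (hist A (shiftS A σ q) π' q' n).2 ∈ A.p1
      · rw [if_pos h, if_pos h]; rfl
      · rw [if_neg h, if_neg h]; rfl

lemma play_shift (A : Arena Q) (σ : Strategy A) (π' : Strategy A) (q q' : Q)
    (he : A.edge q q') (hfirst : q ∈ A.p1 → σ.1 [] q = q') (n : ℕ) :
    play A σ (extendP A π' q q' he) q (n + 1) = play A (shiftS A σ q) π' q' n := by
  show (hist A σ (extendP A π' q q' he) q (n + 1)).2 = _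
  rw [hist_shift A σ π' q q' he hfirst n]
  rfl

lemma prefWeight_shift (A : Arena Q) (σ : Strategy A) (π' : Strategy A) (q q' : Q)
    (he : A.edge q q') (hfirst : q ∈ A.p1 → σ.1 [] q = q') (i : ℕ) :
    prefWeight A (play A σ (extendP A π' q q' he) q) (i + 1) =
      A.w q q' + prefWeight A (play A (shiftS A σ q) π' q') i := by
  unfold prefWeight
  rw [Finset.sum_range_succ']
  have h0 : play A σ (extendP A π' q q' he) q 0 = q := rfl
  have h1 : play A σ (extendP A π' q q' he) q 1 = q' := by
    rw [play_shift A σ π' q q' he hfirst 0]; rfl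
  rw [add_comm]
  congr 1
  · rw [h0, h1]
  · exact Finset.sum_congr rfl fun j _ => by
      rw [play_shift A σ π' q q' he hfirst j, play_shift A σ π' q q' he hfirst (j+1)]

/-- Key step lemma: pushing a sufficient credit along one edge. -/
lemma NSet_push (A : Arena Q) (σ : Strategy A) (c : ℕ) (q q' : Q)
    (hσ : ∀ π : Strategy A, EnObj A c (play A σ π q))
    (he : A.edge q q') (hfirst : q ∈ A.p1 → σ.1 [] q = q') :
    0 ≤ (c : ℤ) + A.w q q' ∧ ((c : ℤ) + A.w q q').toNat ∈ NSet A q' := by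
  have hnn : 0 ≤ (c : ℤ) + A.w q q' := by
    have h := hσ (extendP A (⟨fun _ x => dflt A x, fun _ x => dflt_edge A x⟩)
      q q' he) 1
    erw [show (1:ℕ) = 0 + 1 from rfl, prefWeight_shift A σ _ q q' he hfirst 0] at h
    simpa [prefWeight] using h
  refine ⟨hnn, shiftS A σ q, fun π' => fun i => ?_⟩
  have h := hσ (extendP A π' q q' he) (i + 1)
  rw [prefWeight_shift A σ π' q q' he hfirst i] at h
  rw [Int.toNat_of_nonneg hnn]
  linarith

end AuxShift
section AuxCredit

open Classical

variable {Q : Type}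

noncomputable def credit0 (s : Set ℕ) : ℕ := sInf s

lemma NSet_mono (A : Arena Q) (q : Q) {c d : ℕ} (hcd : c ≤ d) (hc : c ∈ NSet A q) :
    d ∈ NSet A q := by
  obtain ⟨σ, hσ⟩ := hc
  refine ⟨σ, fun π i => ?_⟩
  have h1 := hσ π i
  have h2 : (c:ℤ) ≤ d := by exact_mod_cast hcd
  linarith

lemma good_p1 (A : Arena Q) (q : Q) (h : (NSet A q).Nonempty) (hq : q ∈ A.p1) :
    ∃ q', A.edge q q' ∧ (NSet A q').Nonempty ∧
      (credit0 (NSet A q') : ℤ) ≤ (credit0 (NSet A q) : ℤ) + A.w q q' := by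
  have hmem := Nat.sInf_mem h
  obtain ⟨σ, hσ⟩ := hmem
  set c := credit0 (NSet A q)
  refine ⟨σ.1 [] q, σ.2 [] q, ?_⟩
  obtain ⟨hnn, hmem'⟩ := NSet_push A σ c q (σ.1 [] q) hσ (σ.2 [] q) (fun _ => rfl)
  refine ⟨⟨_, hmem'⟩, ?_⟩
  calc (credit0 (NSet A (σ.1 [] q)) : ℤ) ≤ (((c : ℤ) + A.w q (σ.1 [] q)).toNat : ℤ) := by
        exact_mod_cast Nat.sInf_le hmem'
    _ = (c : ℤ) + A.w q (σ.1 [] q) := Int.toNat_of_nonneg hnn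

lemma good_p2 (A : Arena Q) (q : Q) (h : (NSet A q).Nonempty) (hq : q ∉ A.p1)
    (q' : Q) (he : A.edge q q') :
    (NSet A q').Nonempty ∧
      (credit0 (NSet A q') : ℤ) ≤ (credit0 (NSet A q) : ℤ) + A.w q q' := by
  have hmem := Nat.sInf_mem h
  obtain ⟨σ, hσ⟩ := hmem
  set c := credit0 (NSet A q)
  obtain ⟨hnn, hmem'⟩ := NSet_push A σ c q q' hσ he (fun hh => absurd hh hq)
  refine ⟨⟨_, hmem'⟩, ?_⟩
  calc (credit0 (NSet A q') : ℤ) ≤ (((c : ℤ) + A.w q q').toNat : ℤ) := by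
        exact_mod_cast Nat.sInf_le hmem'
    _ = (c : ℤ) + A.w q q' := Int.toNat_of_nonneg hnn

/-- Memoryless choice function for player 1. -/
noncomputable def gfun (A : Arena Q) (x : Q) : Q :=
  if h : (NSet A x).Nonempty ∧ x ∈ A.p1 then (good_p1 A x h.1 h.2).choose else dflt A x

lemma gfun_edge (A : Arena Q) (x : Q) : A.edge x (gfun A x) := by
  unfold gfun
  split
  · next h => exact (good_p1 A x h.1 h.2).choose_spec.1
  · exact dflt_edge A x

lemma gfun_spec (A : Arena Q) (x : Q) (h : (NSet A x).Nonempty) (hx : x ∈ A.p1) :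
    (NSet A (gfun A x)).Nonempty ∧
      (credit0 (NSet A (gfun A x)) : ℤ) ≤ (credit0 (NSet A x) : ℤ) + A.w x (gfun A x) := by
  have hh : (NSet A x).Nonempty ∧ x ∈ A.p1 := ⟨h, hx⟩
  unfold gfun
  rw [dif_pos hh]
  exact (good_p1 A x hh.1 hh.2).choose_spec.2

/-- The memoryless player-1 strategy. -/
noncomputable def memσ (A : Arena Q) : Strategy A :=
  ⟨fun _ x => gfun A x, fun _ x => gfun_edge A x⟩

lemma memσ_memoryless (A : Arena Q) : Memoryless A (memσ A) := fun _ _ _ => rfl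

lemma mem_invariant (A : Arena Q) (q : Q) (h : (NSet A q).Nonempty) (π : Strategy A) :
    ∀ i, (NSet A (play A (memσ A) π q i)).Nonempty ∧
      (credit0 (NSet A (play A (memσ A) π q i)) : ℤ) ≤
        (credit0 (NSet A q) : ℤ) + prefWeight A (play A (memσ A) π q) i := by
  intro i
  induction i with
  | zero => exact ⟨h, by simp [prefWeight, play_zero]⟩
  | succ n ih =>
      set τ := play A (memσ A) π q with hτ
      rw [prefWeight_succ]
      by_cases hp : τ n ∈ A.p1
      · have hstep : τ (n + 1) = gfun A (τ n) := by
          rw [hτ, play_succ, if_pos hp]; rfl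
        obtain ⟨h1, h2⟩ := gfun_spec A (τ n) ih.1 hp
        rw [hstep]
        exact ⟨h1, by linarith [ih.2]⟩
      · have he : A.edge (τ n) (τ (n + 1)) := play_edge A (memσ A) π q n
        obtain ⟨h1, h2⟩ := good_p2 A (τ n) ih.1 hp (τ (n + 1)) he
        exact ⟨h1, by linarith [ih.2]⟩

/-- Memoryless sufficiency for ordinary energy games. -/
lemma memoryless_energy (A : Arena Q) (q : Q) (h : (NSet A q).Nonempty) :
    ∀ π : Strategy A, EnObj A (credit0 (NSet A q)) (play A (memσ A) π q) := by
  intro π i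
  obtain ⟨h1, h2⟩ := mem_invariant A q h π i
  have : (0 : ℤ) ≤ (credit0 (NSet A (play A (memσ A) π q i)) : ℤ) := Int.ofNat_nonneg _
  linarith

end AuxCredit
section AuxFair

open Classical

variable {Q : Type}

/-- Number of occurrences of `x` in the list `H`. -/
noncomputable def hcount (H : List Q) (x : Q) : ℕ :=
  (H.filter (fun y => decide (y = x))).length

lemma hcount_append (H₁ H₂ : List Q) (x : Q) :
    hcount (H₁ ++ H₂) x = hcount H₁ x + hcount H₂ x := by
  simp [hcount]

lemma hcount_singleton (y x : Q) : hcount [y] x = if y = x then 1 else 0 := by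
  by_cases h : y = x <;> simp [hcount, h]

/-- Number of occurrences of `a` among the first `n` values of `τ`. -/
noncomputable def cnt (τ : ℕ → Q) (a : Q) (n : ℕ) : ℕ :=
  hcount ((List.range n).map τ) a

lemma cnt_zero (τ : ℕ → Q) (a : Q) : cnt τ a 0 = 0 := rfl

lemma cnt_succ (τ : ℕ → Q) (a : Q) (n : ℕ) :
    cnt τ a (n + 1) = cnt τ a n + if τ n = a then 1 else 0 := by
  rw [cnt, List.range_succ, List.map_append, hcount_append]
  simp [cnt, hcount_singleton]

lemma cnt_le (τ : ℕ → Q) (a : Q) (n : ℕ) : cnt τ a n ≤ n := by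
  calc cnt τ a n ≤ ((List.range n).map τ).length := List.length_filter_le _ _
    _ = n := by simp

lemma cnt_const (τ : ℕ → Q) (a : Q) (n : ℕ) :
    ∀ m, n ≤ m → (∀ k, n ≤ k → k < m → τ k ≠ a) → cnt τ a m = cnt τ a n := by
  intro m
  induction m with
  | zero => intro h _; rw [Nat.le_zero.mp h]
  | succ m ih =>
      intro hnm hk
      rcases Nat.lt_or_ge n (m + 1) with hlt | hge
      · have hnm' : n ≤ m := by omega
        rw [cnt_succ, ih hnm' (fun k h1 h2 => hk k h1 (by omega)),
          if_neg (hk m hnm' (by omega)), add_zero]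
      · have : n = m + 1 := by omega
        rw [this]

lemma cnt_occ (τ : ℕ → Q) (a : Q) (hinf : ∀ N, ∃ j, N ≤ j ∧ τ j = a) :
    ∀ s, ∃ j, τ j = a ∧ cnt τ a j = s := by
  intro s
  induction s with
  | zero =>
      obtain ⟨j0, _, hj0⟩ := hinf 0
      have hex : ∃ j, τ j = a := ⟨j0, hj0⟩
      refine ⟨Nat.find hex, Nat.find_spec hex, ?_⟩
      rw [show cnt τ a (Nat.find hex) = cnt τ a 0 from
        cnt_const τ a 0 _ (Nat.zero_le _) (fun k _ hk => Nat.find_min hex hk), cnt_zero]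
  | succ s ihs =>
      obtain ⟨j, hja, hjc⟩ := ihs
      have hex : ∃ k, j + 1 ≤ k ∧ τ k = a := hinf (j + 1)
      set j' := Nat.find hex with hj'
      obtain ⟨hj'1, hj'2⟩ := Nat.find_spec hex
      refine ⟨j', hj'2, ?_⟩
      have h1 : cnt τ a j' = cnt τ a (j + 1) := by
        refine cnt_const τ a (j + 1) j' hj'1 (fun k h1 h2 hka => ?_)
        exact Nat.find_min hex h2 ⟨h1, hka⟩
      rw [h1, cnt_succ, if_pos hja, hjc]

lemma cnt_mod (τ : ℕ → Q) (a : Q) (hinf : ∀ N, ∃ j, N ≤ j ∧ τ j = a)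
    (m t : ℕ) (hm : 0 < m) (ht : t < m) (N : ℕ) :
    ∃ j, N ≤ j ∧ τ j = a ∧ cnt τ a j % m = t := by
  obtain ⟨j, hja, hjc⟩ := cnt_occ τ a hinf (t + m * N)
  refine ⟨j, ?_, hja, ?_⟩
  · have h1 : m * N ≥ N := Nat.le_mul_of_pos_left N hm
    have h2 := cnt_le τ a j
    omega
  · rw [hjc, Nat.add_mul_mod_self_left, Nat.mod_eq_of_lt ht]

/-- The list of fair successors of a node. -/
noncomputable def fairSuccs [Fintype Q] (Ef : Q → Q → Prop) (x : Q) : List Q :=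
  (Finset.univ.filter (fun y => Ef x y)).toList

lemma mem_fairSuccs [Fintype Q] (Ef : Q → Q → Prop) (x y : Q) :
    y ∈ fairSuccs Ef x ↔ Ef x y := by
  simp [fairSuccs]

/-- Round-robin fair move. -/
noncomputable def fairMove [Fintype Q] (A : Arena Q) (Ef : Q → Q → Prop)
    (H : List Q) (x : Q) : Q :=
  if h : 0 < (fairSuccs Ef x).length then
    (fairSuccs Ef x).get ⟨hcount H x % (fairSuccs Ef x).length, Nat.mod_lt _ h⟩
  else dflt A x

lemma fairMove_edge [Fintype Q] (A : Arena Q) (Ef : Q → Q → Prop)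
    (hEf : ∀ a b, Ef a b → A.edge a b) (H : List Q) (x : Q) :
    A.edge x (fairMove A Ef H x) := by
  unfold fairMove
  split
  · next h =>
      exact hEf _ _ ((mem_fairSuccs Ef x _).mp (List.get_mem _ _))
  · exact dflt_edge A x

/-- Player-2 strategy that copies `π` for histories shorter than `i` and then
plays fair moves in round-robin fashion. -/
noncomputable def fairπ [Fintype Q] (A : Arena Q) (Ef : Q → Q → Prop)
    (hEf : ∀ a b, Ef a b → A.edge a b) (π : Strategy A) (i : ℕ) : Strategy A :=
  ⟨fun H x => if H.length < i then π.1 H x else fairMove A Ef H x, by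
    intro H x
    show A.edge x (if H.length < i then π.1 H x else fairMove A Ef H x)
    split
    · exact π.2 H x
    · exact fairMove_edge A Ef hEf H x⟩

lemma hist_len (A : Arena Q) (σ π : Strategy A) (q : Q) (n : ℕ) :
    (hist A σ π q n).1.length = n := by
  rw [hist_fst]; simp

lemma hist_congr (A : Arena Q) (σ π π' : Strategy A) (q : Q) (i : ℕ)
    (hagree : ∀ H x, H.length < i → π'.1 H x = π.1 H x) :
    ∀ n, n ≤ i → hist A σ π' q n = hist A σ π q n := by
  intro n
  induction n with
  | zero => intro _; rfl
  | succ n ih =>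
      intro hn
      have hn' : n ≤ i := by omega
      rw [hist_succ, hist_succ, ih hn']
      by_cases hp : (hist A σ π q n).2 ∈ A.p1
      · rw [if_pos hp, if_pos hp]
      · rw [if_neg hp, if_neg hp,
          hagree _ _ (by rw [hist_len]; omega)]

/-- Reduction: player 1 winning the 2-fair energy game implies winning the
ordinary energy game (fair nodes belong to player 2). -/
lemma fair_reduce [Fintype Q] (A : Arena Q) (Ef : Q → Q → Prop)
    (hEf : ∀ a b, Ef a b → A.edge a b)
    (h2fair : ∀ a b, Ef a b → a ∉ A.p1)
    (q : Q) (hq : Win1En2f A Ef q) : (NSet A q).Nonempty := by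
  obtain ⟨c, σ, h⟩ := hq
  refine ⟨c, σ, fun π => ?_⟩
  by_contra hEn
  unfold EnObj at hEn
  push_neg at hEn
  obtain ⟨i, hi⟩ := hEn
  set π' := fairπ A Ef hEf π i with hπ'
  have hagree : ∀ n, n ≤ i → hist A σ π' q n = hist A σ π q n := by
    refine hist_congr A σ π π' q i (fun H x hH => ?_)
    show (if H.length < i then π.1 H x else fairMove A Ef H x) = π.1 H x
    rw [if_pos hH]
  have hτ : ∀ n, n ≤ i → play A σ π' q n = play A σ π q n := by
    intro n hn
    show (hist A σ π' q n).2 = (hist A σ π q n).2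
    rw [hagree n hn]
  have hpw : prefWeight A (play A σ π' q) i = prefWeight A (play A σ π q) i := by
    refine Finset.sum_congr rfl (fun j hj => ?_)
    rw [Finset.mem_range] at hj
    rw [hτ j (by omega), hτ (j + 1) (by omega)]
  have hEn' : ¬ EnObj A c (play A σ π' q) := by
    intro hE
    have := hE i
    rw [hpw] at this
    linarith
  have hfair : FairPlay Ef (play A σ π' q) := by
    intro a b hab hocc N
    set τ' := play A σ π' q with hτ'def
    have ha2 : a ∉ A.p1 := h2fair a b hab
    have hbmem : b ∈ fairSuccs Ef a := (mem_fairSuccs Ef a b).mpr hab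
    obtain ⟨⟨t, ht⟩, hbt⟩ := List.mem_iff_get.mp hbmem
    have hm : 0 < (fairSuccs Ef a).length := lt_of_le_of_lt (Nat.zero_le _) ht
    have hinf : ∀ M, ∃ j, M ≤ j ∧ τ' j = a := by
      intro M
      obtain ⟨j, hj1, hj2⟩ := hocc M
      exact ⟨j, hj1, hj2⟩
    obtain ⟨j, hjN, hja, hjmod⟩ :=
      cnt_mod τ' a hinf (fairSuccs Ef a).length t hm ht (max N i)
    refine ⟨j, le_trans (le_max_left N i) hjN, hja, ?_⟩
    have hji : i ≤ j := le_trans (le_max_right N i) hjN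
    have hstep : τ' (j + 1) = fairMove A Ef ((List.range j).map τ') a := by
      rw [hτ'def, play_succ]
      rw [show play A σ π' q j = a from hja]
      rw [if_neg ha2, hist_fst]
      show (if ((List.range j).map (play A σ π' q)).length < i then _ else
        fairMove A Ef ((List.range j).map (play A σ π' q)) a) = _
      rw [if_neg (by simp; omega)]
    rw [hstep]
    unfold fairMove
    rw [dif_pos hm]
    have hcnt : hcount ((List.range j).map τ') a = cnt τ' a j := rfl
    have key : ∀ (s : ℕ) (hs : s < (fairSuccs Ef a).length), s = t →
        (fairSuccs Ef a).get ⟨s, hs⟩ = b := by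
      intro s hs hst
      subst hst
      exact hbt
    exact key _ _ (by rw [hcnt, hjmod])
  rcases h π' with hE | hF
  · exact hEn' hE
  · exact hF hfair

end AuxFair
/-- In every 2-fair energy game, player 1 has memoryless
winning strategies from its winning region. -/
theorem twofair_energy_player1_memoryless
    (Q : Type) [Fintype Q] (A : Arena Q) (Ef : Q → Q → Prop)
    (hEf : ∀ a b, Ef a b → A.edge a b)
    (h2fair : ∀ a b, Ef a b → a ∉ A.p1)
    (q : Q) (hq : Win1En2f A Ef q) :
    ∃ c : ℕ, ∃ σ : Strategy A, Memoryless A σ ∧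
      ∀ π : Strategy A,
        EnObj A c (play A σ π q) ∨ ¬ FairPlay Ef (play A σ π q) := by
  have h := fair_reduce A Ef hEf h2fair q hq
  exact ⟨credit0 (NSet A q), memσ A, memσ_memoryless A,
    fun π => Or.inl (memoryless_energy A q h π)⟩
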